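/- arXiv:1710.01105 — 5 statements merged into one kernel-verified Lean document; each statement's English description precedes it below -/
import Mathlib

section
/- Let X and Y be Borel-measurable random vectors in ℝ^m on a probability space such that X and Y are independent, Y is integrable, and the inner product ⟨X,Y⟩ is integrable. Suppose the law of Y is symmetric under negation, i.e., Y and −Y have the same distribution. Let μ > 0 and suppose the event A = {‖Y‖₂² ≥ μ} has positive probability. Then the conditional expectation of the correlation statistic given the detection event vanishes: E[⟨X,Y⟩ | A] = 0. (This is Theorem 1 of the paper: if the attacker's fake output y_k^v is independent of the watermark-driven virtual output y_k', the expected correlation detector statistic conditioned on the triggering event ‖y_k'‖₂² ≥ μ is zero.) -/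
open MeasureTheory ProbabilityTheory
open scoped RealInnerProductSpace

/-!
Since `X` is independent of `Y` and `Y` has the same law as `-Y`, the pair `(X, Y)` has the
same joint law as `(X, -Y)`. The integrand `1{μt ≤ ‖Y‖²} ⟪X, Y⟫` is a function of the pair that
is odd in its second argument, so its integral equals its own negative and hence vanishes.
-/

section

variable {Ω α β E : Type*} [MeasurableSpace Ω] {μ : Measure Ω}
  [MeasurableSpace α] [MeasurableSpace β]

theorem ProbabilityTheory.IndepFun.map_prodMk_comp_eq_of_map_eq [IsFiniteMeasure μ]
    {X : Ω → α} {Y : Ω → β} {g : β → β} (hXY : IndepFun X Y μ)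
    (hX : AEMeasurable X μ) (hY : AEMeasurable Y μ) (hg : Measurable g)
    (hYg : μ.map Y = μ.map (g ∘ Y)) :
    μ.map (fun ω => (X ω, Y ω)) = μ.map (fun ω => (X ω, g (Y ω))) := by
  rw [hXY.map_prod_eq_prod_map_map hX hY, hYg,
    ← (hXY.comp measurable_id hg).map_prod_eq_prod_map_map hX (hg.comp_aemeasurable hY)]
  rfl

theorem MeasureTheory.integral_comp_eq_zero_of_map_eq [NormedAddCommGroup E] [NormedSpace ℝ E]
    {Z : Ω → α} {σ : α → α} {f : α → E} (hZ : AEMeasurable Z μ) (hσ : Measurable σ)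
    (hf : StronglyMeasurable f) (hmap : μ.map (σ ∘ Z) = μ.map Z)
    (hodd : ∀ a, f (σ a) = -f a) :
    ∫ ω, f (Z ω) ∂μ = 0 := by
  have h : ∫ ω, f (Z ω) ∂μ = -∫ ω, f (Z ω) ∂μ := calc
    ∫ ω, f (Z ω) ∂μ = ∫ ω, f (σ (Z ω)) ∂μ := by
      rw [← integral_map hZ hf.aestronglyMeasurable, ← hmap,
        integral_map (hσ.comp_aemeasurable hZ) hf.aestronglyMeasurable, Function.comp_def]
    _ = -∫ ω, f (Z ω) ∂μ := by simp only [hodd, integral_neg]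
  have := IsAddTorsionFree.of_isTorsionFree ℝ E
  exact self_eq_neg.mp h

end

theorem stmt_0_general {Ω : Type*} [MeasurableSpace Ω] (μ : Measure Ω) [IsProbabilityMeasure μ]
    {m : ℕ} (X Y : Ω → EuclideanSpace ℝ (Fin m))
    (hX : Measurable X) (hY : Measurable Y)
    (hindep : IndepFun X Y μ)
    (hsymm : Measure.map Y μ = Measure.map (fun ω => -(Y ω)) μ)
    (μt : ℝ)
    (A : Set Ω) (hA : A = {ω | μt ≤ ‖Y ω‖ ^ 2}) :
    (∫ ω in A, ⟪X ω, Y ω⟫ ∂μ) / (μ A).toReal = 0 := by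
  suffices h : ∫ ω in A, ⟪X ω, Y ω⟫ ∂μ = 0 by rw [h, zero_div]
  have hA_meas : MeasurableSet A := hA ▸ measurableSet_le measurable_const (hY.norm.pow_const 2)
  rw [← integral_indicator hA_meas]
  have hmeas : Measurable fun p : EuclideanSpace ℝ (Fin m) × EuclideanSpace ℝ (Fin m) =>
      if μt ≤ ‖p.2‖ ^ 2 then ⟪p.1, p.2⟫ else 0 :=
    Measurable.ite (measurableSet_le measurable_const (measurable_snd.norm.pow_const 2))
      (measurable_fst.inner measurable_snd) measurable_const
  convert integral_comp_eq_zero_of_map_eq (hX.prodMk hY).aemeasurable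
    (measurable_fst.prodMk measurable_snd.neg) hmeas.stronglyMeasurable
    (hindep.map_prodMk_comp_eq_of_map_eq hX.aemeasurable hY.aemeasurable measurable_neg
      hsymm).symm (fun p => by split_ifs <;> simp_all) using 2 with ω
  simp [hA, Set.indicator]

/-- Theorem 1 of the paper: if the fake output `X` is independent of the
watermark-driven virtual output `Y` (whose law is symmetric under negation),
then the expected correlation statistic, conditioned on the triggering event
`‖Y‖₂² ≥ μt`, is zero. Here `E[Z | A] = E[Z·1_A] / P(A)`. -/
theorem stmt_0 {Ω : Type*} [MeasurableSpace Ω] (μ : Measure Ω) [IsProbabilityMeasure μ]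
    {m : ℕ} (X Y : Ω → EuclideanSpace ℝ (Fin m))
    (hX : Measurable X) (hY : Measurable Y)
    (hindep : IndepFun X Y μ)
    (hYint : Integrable Y μ)
    (hZint : Integrable (fun ω => ⟪X ω, Y ω⟫) μ)
    (hsymm : Measure.map Y μ = Measure.map (fun ω => -(Y ω)) μ)
    (μt : ℝ) (hμt : 0 < μt)
    (A : Set Ω) (hA : A = {ω | μt ≤ ‖Y ω‖ ^ 2})
    (hApos : 0 < μ A) :
    (∫ ω in A, ⟪X ω, Y ω⟫ ∂μ) / (μ A).toReal = 0 :=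
  stmt_0_general μ X Y hX hY hindep hsymm μt A hA
end

section
/- Let A, F ∈ ℝ^{n×n}, let 0 < α ≤ 1 and 0 < β ≤ 1 with ᾱ = 1−α and β̄ = 1−β, and let ε > 0. Define the linear operator 𝓛₀ on pairs of n×n real matrices by 𝓛₀(X,Y) = ( A(ᾱX + αY)Aᵀ , F(βX + β̄Y)Fᵀ ). Define sequences of symmetric matrices by 𝒮₀ = ℛ₀ = εI and 𝒮_{k+1} = εI + ᾱAᵀ𝒮ₖA + αFᵀℛₖF, ℛ_{k+1} = εI + βAᵀ𝒮ₖA + β̄FᵀℛₖF. If there exist symmetric matrices S★ and R★ such that 𝒮ₖ ⪯ S★ and ℛₖ ⪯ R★ in the Loewner order for every k, then the operator 𝓛₀ is stable: for every pair (M,N) of n×n real matrices, 𝓛₀^k(M,N) → (0,0) as k → ∞. (This is the deterministic content of Lemma 1 of the paper, where the boundedness hypothesis encodes finiteness of the LQG cost under Markovian packet drops.) -/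
/-!
With respect to the pairing `⟨(X, Y), (P, Q)⟩ = β tr (X P) + α tr (Y Q)` the adjoint of `𝓛₀` is
`𝓣 (P, Q) = ((1 - α) Aᵀ P A + α Fᵀ Q F, β Aᵀ P A + (1 - β) Fᵀ Q F)`, the map driving the recursion
`(𝒮ₖ₊₁, ℛₖ₊₁) = ε (I, I) + 𝓣 (𝒮ₖ, ℛₖ)`. The sum of the first `N` terms of this bounded recursion
telescopes to a pair `q ⪰ ε (I, I)` with `𝓣 q ⪯ (1 - 1/N) q`, so `⟨𝓛₀ᵏ p, q⟩` decays geometrically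
for every positive pair `p`, and with it the traces of `𝓛₀ᵏ p`. An arbitrary pair `(M, N)` is
controlled by the positive pair `c (I, I)`: the relation `2 |xᵀ X y| ≤ xᵀ G x + yᵀ G y` is preserved
by `𝓛₀`, and it bounds every entry of `X` by `tr G`.
-/

open Matrix Filter
open scoped Topology MatrixOrder

lemma map_sum_range_of_eq_add_map {R E : Type*} [Semiring R] [AddCommGroup E] [Module R E]
    (T : E →ₗ[R] E) {v : E} {s : ℕ → E} (hs : ∀ k, s (k + 1) = v + T (s k)) (N : ℕ) :
    T (∑ k ∈ Finset.range N, s k) = ∑ k ∈ Finset.range N, s k + s N - s 0 - N • v := by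
  have hTs (k : ℕ) : T (s k) = s (k + 1) - v := eq_sub_of_add_eq' (hs k).symm
  have hshift := Finset.sum_range_succ' s N
  rw [Finset.sum_range_succ] at hshift
  rw [map_sum, Finset.sum_congr rfl fun k _ => hTs k, Finset.sum_sub_distrib, Finset.sum_const,
    Finset.card_range, eq_sub_of_add_eq hshift.symm]

theorem exists_contraction_of_bounded {E : Type*} [AddCommGroup E] [PartialOrder E]
    [IsOrderedAddMonoid E] [Module ℝ E] [IsOrderedModule ℝ E]
    (T : E →ₗ[ℝ] E) (hT : ∀ x, 0 ≤ x → 0 ≤ T x) {u : E} (hu : 0 ≤ u) {ε : ℝ} (hε : 0 < ε)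
    {s : ℕ → E} (hs0 : s 0 = ε • u) (hs : ∀ k, s (k + 1) = ε • u + T (s k))
    {C : ℝ} (hC : ∀ k, s k ≤ C • u) :
    ∃ q : E, ∃ ρ : ℝ, ε • u ≤ q ∧ 0 ≤ ρ ∧ ρ < 1 ∧ T q ≤ ρ • q := by
  have hεu : 0 ≤ ε • u := smul_nonneg hε.le hu
  have hs_ge (k : ℕ) : ε • u ≤ s k := by
    induction k with
    | zero => exact hs0.ge
    | succ k ih => exact (hs k).symm ▸ le_add_of_nonneg_right (hT _ (hεu.trans ih))
  obtain ⟨K, hK⟩ := exists_nat_gt (2 * C / ε)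
  set N := K + 1
  have hN : (0 : ℝ) < N := by positivity
  have hNε : 2 * C ≤ N * ε := by
    rw [div_lt_iff₀ hε] at hK
    push_cast [N]; nlinarith
  set q := ∑ k ∈ Finset.range N, s k
  have hq_le : q ≤ (N * C) • u := by
    calc q ≤ ∑ k ∈ Finset.range N, C • u := Finset.sum_le_sum fun k _ => hC k
      _ = (N * C) • u := by
        rw [Finset.sum_const, Finset.card_range, mul_smul, Nat.cast_smul_eq_nsmul]
  have hTq : T q = q + s N - s 0 - (N * ε) • u := by
    rw [map_sum_range_of_eq_add_map T hs, mul_smul, Nat.cast_smul_eq_nsmul]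
  refine ⟨q, 1 - 1 / N, (hs_ge 0).trans ?_, ?_, ?_, ?_⟩
  · exact Finset.single_le_sum (fun k _ => hεu.trans (hs_ge k)) (by simp [N])
  · rw [sub_nonneg, div_le_one hN]
    exact_mod_cast Nat.le_add_left 1 K
  · have : 0 < 1 / (N : ℝ) := by positivity
    linarith
  · have hq_div : (1 / (N : ℝ)) • q ≤ C • u := by
      calc (1 / (N : ℝ)) • q ≤ (1 / (N : ℝ)) • ((N * C) • u) :=
            smul_le_smul_of_nonneg_left hq_le (by positivity)
        _ = C • u := by rw [smul_smul, one_div, inv_mul_cancel_left₀ hN.ne']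
    have h2C : (2 * C) • u ≤ (N * ε) • u := smul_le_smul_of_nonneg_right hNε hu
    have hs0_nonneg : 0 ≤ s 0 := hs0 ▸ hεu
    calc T q = q + s N - s 0 - (N * ε) • u := hTq
      _ ≤ q + C • u - (2 * C) • u := by
        gcongr ?_ - ?_
        calc q + s N - s 0 ≤ q + s N := sub_le_self _ hs0_nonneg
          _ ≤ q + C • u := by gcongr; exact hC N
      _ = q - C • u := by rw [two_mul, add_smul]; abel
      _ ≤ (1 - 1 / (N : ℝ)) • q := by rw [sub_smul, one_smul]; exact sub_le_sub_left hq_div q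

lemma tendsto_zero_of_forall_abs_apply_le {ι m n : Type*} {l : Filter ι} {X : ι → Matrix m n ℝ}
    {b : ι → ℝ} (hb : Tendsto b l (𝓝 0)) (h : ∀ k i j, |X k i j| ≤ b k) :
    Tendsto X l (𝓝 0) :=
  tendsto_pi_nhds.2 fun i => tendsto_pi_nhds.2 fun j =>
    squeeze_zero_norm (fun k => (Real.norm_eq_abs _).trans_le (h k i j)) hb

variable {m : Type*}

lemma star_eq_transpose (B : Matrix m m ℝ) : star B = Bᵀ := by
  rw [star_eq_conjTranspose, conjTranspose_eq_transpose_of_trivial]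

variable [Fintype m]

lemma trace_mul_nonneg {X D : Matrix m m ℝ} (hX : 0 ≤ X) (hD : 0 ≤ D) : 0 ≤ (X * D).trace := by
  classical
  obtain ⟨B, rfl⟩ := CStarAlgebra.nonneg_iff_eq_star_mul_self.mp hX
  rw [Matrix.mul_assoc, trace_mul_comm]
  exact (star_right_conjugate_nonneg hD B).posSemidef.trace_nonneg

lemma trace_mul_le_trace_mul {X P P' : Matrix m m ℝ} (hX : 0 ≤ X) (h : P ≤ P') :
    (X * P).trace ≤ (X * P').trace := by
  have := trace_mul_nonneg hX (sub_nonneg.mpr h)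
  rwa [Matrix.mul_sub, trace_sub, sub_nonneg] at this

/-- Equivalent to `!![G, X; Xᵀ, G] ⪰ 0` and `!![G, -X; -Xᵀ, G] ⪰ 0`. Unlike `X ≤ G` it makes sense
for non-symmetric `X`, and it is preserved by congruences `Z ↦ B Z Bᵀ`. -/
def Dominates (G X : Matrix m m ℝ) : Prop :=
  ∀ x y : m → ℝ, 2 * |x ⬝ᵥ X *ᵥ y| ≤ x ⬝ᵥ G *ᵥ x + y ⬝ᵥ G *ᵥ y

namespace Dominates

variable {G H X Y : Matrix m m ℝ}

lemma add (hX : Dominates G X) (hY : Dominates H Y) : Dominates (G + H) (X + Y) := by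
  intro x y
  have := abs_add_le (x ⬝ᵥ X *ᵥ y) (x ⬝ᵥ Y *ᵥ y)
  simp only [add_mulVec, dotProduct_add]
  linarith [hX x y, hY x y]

lemma smul (hX : Dominates G X) {c : ℝ} (hc : 0 ≤ c) : Dominates (c • G) (c • X) := by
  intro x y
  simp only [smul_mulVec, dotProduct_smul, smul_eq_mul, abs_mul, abs_of_nonneg hc]
  nlinarith [hX x y]

lemma conj (hX : Dominates G X) (B : Matrix m m ℝ) : Dominates (B * G * Bᵀ) (B * X * Bᵀ) := by
  have hquad (Z : Matrix m m ℝ) (x y : m → ℝ) :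
      x ⬝ᵥ (B * Z * Bᵀ) *ᵥ y = (Bᵀ *ᵥ x) ⬝ᵥ Z *ᵥ (Bᵀ *ᵥ y) := by
    rw [← mulVec_mulVec, ← mulVec_mulVec, dotProduct_mulVec, mulVec_transpose, mulVec_transpose]
  intro x y
  simp only [hquad]
  exact hX _ _

lemma le (h : Dominates G X) (hG : G.IsHermitian) (hX : X.IsHermitian) : X ≤ G := by
  refine PosSemidef.of_dotProduct_mulVec_nonneg (hG.sub hX) fun x => ?_
  have := le_abs_self (x ⬝ᵥ X *ᵥ x)
  simp only [star_trivial, sub_mulVec, dotProduct_sub]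
  linarith [h x x]

lemma abs_apply_le_trace [DecidableEq m] (h : Dominates G X) (hG : 0 ≤ G) (i j : m) :
    |X i j| ≤ G.trace := by
  have hdiag (k : m) : G k k ≤ G.trace :=
    Finset.single_le_sum (f := fun l => G l l) (fun l _ => hG.posSemidef.diag_nonneg)
      (Finset.mem_univ k)
  have := h (Pi.single i 1) (Pi.single j 1)
  simp only [mulVec_single_one, single_one_dotProduct, col_apply] at this
  linarith [hdiag i, hdiag j]

end Dominates

lemma dominates_sum_abs_smul_one [DecidableEq m] (X : Matrix m m ℝ) :
    Dominates ((∑ i, ∑ j, |X i j|) • 1) X := by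
  intro x y
  have hsq (v : m → ℝ) (i : m) : v i ^ 2 ≤ v ⬝ᵥ v := by
    simpa [dotProduct, sq] using
      Finset.single_le_sum (f := fun j => v j * v j) (fun j _ => mul_self_nonneg _)
        (Finset.mem_univ i)
  have hxy (i j : m) : 2 * |x i * y j| ≤ x ⬝ᵥ x + y ⬝ᵥ y := by
    rw [abs_mul]
    nlinarith [sq_nonneg (|x i| - |y j|), sq_abs (x i), sq_abs (y j), hsq x i, hsq y j]
  calc 2 * |x ⬝ᵥ X *ᵥ y| = 2 * |∑ i, ∑ j, X i j * (x i * y j)| := by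
        simp only [dotProduct, mulVec, Finset.mul_sum]
        congr 2
        exact Finset.sum_congr rfl fun i _ => Finset.sum_congr rfl fun j _ => by ring
    _ ≤ 2 * ∑ i, ∑ j, |X i j| * |x i * y j| := by
        gcongr
        refine (Finset.abs_sum_le_sum_abs _ _).trans (Finset.sum_le_sum fun i _ => ?_)
        exact (Finset.abs_sum_le_sum_abs (fun j => X i j * (x i * y j)) _).trans_eq
          (by simp only [abs_mul])
    _ ≤ ∑ i, ∑ j, |X i j| * (x ⬝ᵥ x + y ⬝ᵥ y) := by
        simp only [Finset.mul_sum]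
        refine Finset.sum_le_sum fun i _ => Finset.sum_le_sum fun j _ => ?_
        linarith [mul_le_mul_of_nonneg_left (hxy i j) (abs_nonneg (X i j))]
    _ = (∑ i, ∑ j, |X i j|) * (x ⬝ᵥ x + y ⬝ᵥ y) := by simp only [Finset.sum_mul]
    _ = x ⬝ᵥ ((∑ i, ∑ j, |X i j|) • 1 : Matrix m m ℝ) *ᵥ x +
          y ⬝ᵥ ((∑ i, ∑ j, |X i j|) • 1 : Matrix m m ℝ) *ᵥ y := by
        simp only [smul_mulVec, one_mulVec, dotProduct_smul, smul_eq_mul]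
        ring

lemma Matrix.IsSymm.le_sum_abs_smul_one [DecidableEq m] {X : Matrix m m ℝ} (hX : X.IsSymm) :
    X ≤ (∑ i, ∑ j, |X i j|) • 1 :=
  (dominates_sum_abs_smul_one X).le (isHermitian_iff_isSymm.2 (isSymm_one.smul _))
    (isHermitian_iff_isSymm.2 hX)

section Operators

variable (A F : Matrix m m ℝ) (α β : ℝ)

def lyapunovMap : Matrix m m ℝ × Matrix m m ℝ →ₗ[ℝ] Matrix m m ℝ × Matrix m m ℝ where
  toFun p := (A * ((1 - α) • p.1 + α • p.2) * Aᵀ, F * (β • p.1 + (1 - β) • p.2) * Fᵀ)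
  map_add' p q := by
    ext : 1 <;>
      simp only [Prod.fst_add, Prod.snd_add, smul_add, Matrix.mul_add, Matrix.add_mul] <;> abel
  map_smul' c p := by
    ext : 1 <;>
      simp only [Prod.smul_fst, Prod.smul_snd, smul_comm _ c, ← smul_add, Matrix.mul_smul,
        Matrix.smul_mul, RingHom.id_apply]

def lyapunovMapDual : Matrix m m ℝ × Matrix m m ℝ →ₗ[ℝ] Matrix m m ℝ × Matrix m m ℝ where
  toFun q := ((1 - α) • (Aᵀ * q.1 * A) + α • (Fᵀ * q.2 * F),
    β • (Aᵀ * q.1 * A) + (1 - β) • (Fᵀ * q.2 * F))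
  map_add' p q := by
    ext : 1 <;>
      simp only [Prod.fst_add, Prod.snd_add, smul_add, Matrix.mul_add, Matrix.add_mul] <;> abel
  map_smul' c p := by
    ext : 1 <;>
      simp only [Prod.smul_fst, Prod.smul_snd, smul_comm _ c, ← smul_add, Matrix.mul_smul,
        Matrix.smul_mul, RingHom.id_apply]

/-- The weights make `lyapunovMapDual` the adjoint of `lyapunovMap`. -/
def tracePairing (p q : Matrix m m ℝ × Matrix m m ℝ) : ℝ :=
  β * (p.1 * q.1).trace + α * (p.2 * q.2).trace

lemma lyapunovMap_apply (p : Matrix m m ℝ × Matrix m m ℝ) :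
    lyapunovMap A F α β p =
      (A * ((1 - α) • p.1 + α • p.2) * Aᵀ, F * (β • p.1 + (1 - β) • p.2) * Fᵀ) := rfl

lemma lyapunovMapDual_apply (q : Matrix m m ℝ × Matrix m m ℝ) :
    lyapunovMapDual A F α β q =
      ((1 - α) • (Aᵀ * q.1 * A) + α • (Fᵀ * q.2 * F),
        β • (Aᵀ * q.1 * A) + (1 - β) • (Fᵀ * q.2 * F)) := rfl

variable {α β}

lemma lyapunovMap_nonneg (hα : α ∈ Set.Icc 0 1) (hβ : β ∈ Set.Icc 0 1)
    {p : Matrix m m ℝ × Matrix m m ℝ} (hp : 0 ≤ p) : 0 ≤ lyapunovMap A F α β p := by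
  obtain ⟨hp₁, hp₂⟩ := hp
  have hα' : 0 ≤ 1 - α := sub_nonneg.mpr hα.2
  have hβ' : 0 ≤ 1 - β := sub_nonneg.mpr hβ.2
  have hA := star_right_conjugate_nonneg (add_nonneg (smul_nonneg hα' hp₁) (smul_nonneg hα.1 hp₂)) A
  have hF := star_right_conjugate_nonneg (add_nonneg (smul_nonneg hβ.1 hp₁) (smul_nonneg hβ' hp₂)) F
  rw [star_eq_transpose] at hA hF
  exact ⟨hA, hF⟩

lemma lyapunovMapDual_nonneg (hα : α ∈ Set.Icc 0 1) (hβ : β ∈ Set.Icc 0 1)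
    {q : Matrix m m ℝ × Matrix m m ℝ} (hq : 0 ≤ q) : 0 ≤ lyapunovMapDual A F α β q := by
  obtain ⟨hq₁, hq₂⟩ := hq
  have hα' : 0 ≤ 1 - α := sub_nonneg.mpr hα.2
  have hβ' : 0 ≤ 1 - β := sub_nonneg.mpr hβ.2
  have hA := star_left_conjugate_nonneg hq₁ A
  have hF := star_left_conjugate_nonneg hq₂ F
  rw [star_eq_transpose] at hA hF
  exact ⟨add_nonneg (smul_nonneg hα' hA) (smul_nonneg hα.1 hF),
    add_nonneg (smul_nonneg hβ.1 hA) (smul_nonneg hβ' hF)⟩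

lemma tracePairing_lyapunovMap (p q : Matrix m m ℝ × Matrix m m ℝ) :
    tracePairing α β (lyapunovMap A F α β p) q =
      tracePairing α β p (lyapunovMapDual A F α β q) := by
  have hcyc (B X Y : Matrix m m ℝ) : (B * X * Bᵀ * Y).trace = (X * (Bᵀ * Y * B)).trace := by
    rw [Matrix.mul_assoc, Matrix.mul_assoc, trace_mul_comm, Matrix.mul_assoc]
  simp only [tracePairing, lyapunovMap_apply, lyapunovMapDual_apply, hcyc, Matrix.add_mul,
    Matrix.mul_add, Matrix.smul_mul, Matrix.mul_smul, trace_add, trace_smul, smul_eq_mul]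
  ring

lemma tracePairing_smul_right (c : ℝ) (p q : Matrix m m ℝ × Matrix m m ℝ) :
    tracePairing α β p (c • q) = c * tracePairing α β p q := by
  simp only [tracePairing, Prod.smul_fst, Prod.smul_snd, Matrix.mul_smul, trace_smul, smul_eq_mul]
  ring

lemma tracePairing_mono_right (hα : 0 ≤ α) (hβ : 0 ≤ β) {p q q' : Matrix m m ℝ × Matrix m m ℝ}
    (hp : 0 ≤ p) (hqq' : q ≤ q') : tracePairing α β p q ≤ tracePairing α β p q' :=
  add_le_add (mul_le_mul_of_nonneg_left (trace_mul_le_trace_mul hp.1 hqq'.1) hβ)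
    (mul_le_mul_of_nonneg_left (trace_mul_le_trace_mul hp.2 hqq'.2) hα)

lemma iterate_lyapunovMap_nonneg (hα : α ∈ Set.Icc 0 1) (hβ : β ∈ Set.Icc 0 1)
    {p : Matrix m m ℝ × Matrix m m ℝ} (hp : 0 ≤ p) (k : ℕ) :
    0 ≤ (lyapunovMap A F α β)^[k] p := by
  induction k with
  | zero => exact hp
  | succ k ih =>
    rw [Function.iterate_succ_apply']
    exact lyapunovMap_nonneg A F hα hβ ih

lemma tracePairing_iterate_lyapunovMap_le (hα : α ∈ Set.Icc 0 1) (hβ : β ∈ Set.Icc 0 1)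
    {p q : Matrix m m ℝ × Matrix m m ℝ} (hp : 0 ≤ p) {ρ : ℝ} (hρ : 0 ≤ ρ)
    (hq : lyapunovMapDual A F α β q ≤ ρ • q) (k : ℕ) :
    tracePairing α β ((lyapunovMap A F α β)^[k] p) q ≤ ρ ^ k * tracePairing α β p q := by
  induction k with
  | zero => simp
  | succ k ih =>
    calc tracePairing α β ((lyapunovMap A F α β)^[k + 1] p) q
        = tracePairing α β ((lyapunovMap A F α β)^[k] p) (lyapunovMapDual A F α β q) := by
          rw [Function.iterate_succ_apply', tracePairing_lyapunovMap]
      _ ≤ tracePairing α β ((lyapunovMap A F α β)^[k] p) (ρ • q) :=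
          tracePairing_mono_right hα.1 hβ.1 (iterate_lyapunovMap_nonneg A F hα hβ hp k) hq
      _ ≤ ρ ^ (k + 1) * tracePairing α β p q := by
          rw [tracePairing_smul_right, pow_succ', mul_assoc]
          exact mul_le_mul_of_nonneg_left ih hρ

end Operators

section Stability

variable {A F : Matrix m m ℝ} {α β : ℝ}

theorem tendsto_trace_iterate_lyapunovMap [DecidableEq m] (hα : α ∈ Set.Ioc 0 1) (hβ : β ∈ Set.Ioc 0 1)
    {ε : ℝ} (hε : 0 < ε) {q : Matrix m m ℝ × Matrix m m ℝ} (hq : ε • 1 ≤ q)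
    {ρ : ℝ} (hρ₀ : 0 ≤ ρ) (hρ₁ : ρ < 1) (hTq : lyapunovMapDual A F α β q ≤ ρ • q)
    {p : Matrix m m ℝ × Matrix m m ℝ} (hp : 0 ≤ p) :
    Tendsto (fun k => ((lyapunovMap A F α β)^[k] p).1.trace) atTop (𝓝 0) ∧
      Tendsto (fun k => ((lyapunovMap A F α β)^[k] p).2.trace) atTop (𝓝 0) := by
  have hαI := Set.Ioc_subset_Icc_self hα
  have hβI := Set.Ioc_subset_Icc_self hβ
  set G := fun k => (lyapunovMap A F α β)^[k] p
  have hG (k : ℕ) : 0 ≤ G k := iterate_lyapunovMap_nonneg A F hαI hβI hp k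
  set w := tracePairing α β p q
  have hbound (k : ℕ) : ε * (β * (G k).1.trace + α * (G k).2.trace) ≤ ρ ^ k * w :=
    calc ε * (β * (G k).1.trace + α * (G k).2.trace) = tracePairing α β (G k) (ε • 1) := by
          simp only [tracePairing, Prod.smul_fst, Prod.smul_snd, Prod.fst_one, Prod.snd_one,
            Matrix.mul_smul, Matrix.mul_one, trace_smul, smul_eq_mul]
          ring
      _ ≤ tracePairing α β (G k) q := tracePairing_mono_right hαI.1 hβI.1 (hG k) hq
      _ ≤ ρ ^ k * w := tracePairing_iterate_lyapunovMap_le A F hαI hβI hp hρ₀ hTq k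
  have hgeo (c : ℝ) : Tendsto (fun k => ρ ^ k * c) atTop (𝓝 0) := by
    simpa using (tendsto_pow_atTop_nhds_zero_of_lt_one hρ₀ hρ₁).mul_const c
  have htr₁ (k : ℕ) := (hG k).1.posSemidef.trace_nonneg
  have htr₂ (k : ℕ) := (hG k).2.posSemidef.trace_nonneg
  constructor
  · refine squeeze_zero htr₁ (fun k => ?_) (hgeo (w / (ε * β)))
    rw [← mul_div_assoc, le_div_iff₀ (mul_pos hε hβ.1)]
    nlinarith [hbound k, mul_nonneg hε.le (mul_nonneg hα.1.le (htr₂ k))]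
  · refine squeeze_zero htr₂ (fun k => ?_) (hgeo (w / (ε * α)))
    rw [← mul_div_assoc, le_div_iff₀ (mul_pos hε hα.1)]
    nlinarith [hbound k, mul_nonneg hε.le (mul_nonneg hβ.1.le (htr₁ k))]

lemma dominates_lyapunovMap (hα : α ∈ Set.Icc 0 1) (hβ : β ∈ Set.Icc 0 1)
    {g p : Matrix m m ℝ × Matrix m m ℝ} (h₁ : Dominates g.1 p.1) (h₂ : Dominates g.2 p.2) :
    Dominates (lyapunovMap A F α β g).1 (lyapunovMap A F α β p).1 ∧
      Dominates (lyapunovMap A F α β g).2 (lyapunovMap A F α β p).2 :=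
  ⟨((h₁.smul (sub_nonneg.mpr hα.2)).add (h₂.smul hα.1)).conj A,
    ((h₁.smul hβ.1).add (h₂.smul (sub_nonneg.mpr hβ.2))).conj F⟩

lemma dominates_iterate_lyapunovMap (hα : α ∈ Set.Icc 0 1) (hβ : β ∈ Set.Icc 0 1)
    {g p : Matrix m m ℝ × Matrix m m ℝ} (h₁ : Dominates g.1 p.1) (h₂ : Dominates g.2 p.2)
    (k : ℕ) :
    Dominates ((lyapunovMap A F α β)^[k] g).1 ((lyapunovMap A F α β)^[k] p).1 ∧
      Dominates ((lyapunovMap A F α β)^[k] g).2 ((lyapunovMap A F α β)^[k] p).2 := by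
  induction k with
  | zero => exact ⟨h₁, h₂⟩
  | succ k ih =>
    simp only [Function.iterate_succ_apply']
    exact dominates_lyapunovMap hα hβ ih.1 ih.2

theorem tendsto_iterate_lyapunovMap [DecidableEq m] (hα : α ∈ Set.Ioc 0 1) (hβ : β ∈ Set.Ioc 0 1)
    {ε : ℝ} (hε : 0 < ε) {q : Matrix m m ℝ × Matrix m m ℝ} (hq : ε • 1 ≤ q)
    {ρ : ℝ} (hρ₀ : 0 ≤ ρ) (hρ₁ : ρ < 1) (hTq : lyapunovMapDual A F α β q ≤ ρ • q)
    (p : Matrix m m ℝ × Matrix m m ℝ) :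
    Tendsto (fun k => (lyapunovMap A F α β)^[k] p) atTop (𝓝 0) := by
  have hαI := Set.Ioc_subset_Icc_self hα
  have hβI := Set.Ioc_subset_Icc_self hβ
  set g : Matrix m m ℝ × Matrix m m ℝ :=
    ((∑ i, ∑ j, |p.1 i j|) • 1, (∑ i, ∑ j, |p.2 i j|) • 1)
  have hg : 0 ≤ g := ⟨smul_nonneg (by positivity) PosSemidef.one.nonneg,
    smul_nonneg (by positivity) PosSemidef.one.nonneg⟩
  have hG (k : ℕ) := iterate_lyapunovMap_nonneg A F hαI hβI hg k
  have hdom := dominates_iterate_lyapunovMap (A := A) (F := F) (g := g) (p := p) hαI hβI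
    (dominates_sum_abs_smul_one p.1) (dominates_sum_abs_smul_one p.2)
  obtain ⟨htr₁, htr₂⟩ := tendsto_trace_iterate_lyapunovMap hα hβ hε hq hρ₀ hρ₁ hTq hg
  exact (tendsto_zero_of_forall_abs_apply_le htr₁ fun k =>
      (hdom k).1.abs_apply_le_trace (hG k).1).prodMk_nhds
    (tendsto_zero_of_forall_abs_apply_le htr₂ fun k => (hdom k).2.abs_apply_le_trace (hG k).2)

end Stability

/-- Lemma 1 of the paper (deterministic content): if the coupled Riccati-type
sequences `𝒮ₖ, ℛₖ` are bounded above in the Loewner order, then the linear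
operator `𝓛₀` is stable: its iterates applied to any pair of matrices tend to
zero. -/
theorem stmt_1 {n : ℕ} (A F : Matrix (Fin n) (Fin n) ℝ)
    (α β : ℝ) (hα0 : 0 < α) (hα1 : α ≤ 1) (hβ0 : 0 < β) (hβ1 : β ≤ 1)
    (ε : ℝ) (hε : 0 < ε)
    (L0 : Matrix (Fin n) (Fin n) ℝ × Matrix (Fin n) (Fin n) ℝ →
          Matrix (Fin n) (Fin n) ℝ × Matrix (Fin n) (Fin n) ℝ)
    (hL0 : ∀ X Y, L0 (X, Y) =
      (A * ((1 - α) • X + α • Y) * Aᵀ, F * (β • X + (1 - β) • Y) * Fᵀ))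
    (S R : ℕ → Matrix (Fin n) (Fin n) ℝ)
    (hS0 : S 0 = ε • (1 : Matrix (Fin n) (Fin n) ℝ))
    (hR0 : R 0 = ε • (1 : Matrix (Fin n) (Fin n) ℝ))
    (hSrec : ∀ k, S (k + 1) =
      ε • (1 : Matrix (Fin n) (Fin n) ℝ) + (1 - α) • (Aᵀ * S k * A) + α • (Fᵀ * R k * F))
    (hRrec : ∀ k, R (k + 1) =
      ε • (1 : Matrix (Fin n) (Fin n) ℝ) + β • (Aᵀ * S k * A) + (1 - β) • (Fᵀ * R k * F))
    (Sstar Rstar : Matrix (Fin n) (Fin n) ℝ)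
    (hSstarSymm : Sstar.IsSymm) (hRstarSymm : Rstar.IsSymm)
    (hSbound : ∀ k, (Sstar - S k).PosSemidef)
    (hRbound : ∀ k, (Rstar - R k).PosSemidef) :
    ∀ M N : Matrix (Fin n) (Fin n) ℝ,
      Tendsto (fun k => L0^[k] (M, N)) atTop (𝓝 (0, 0)) := by
  intro M N
  have hL : L0 = lyapunovMap A F α β := funext fun p => hL0 p.1 p.2
  subst hL
  set C := max (∑ i, ∑ j, |Sstar i j|) (∑ i, ∑ j, |Rstar i j|)
  have hC (k : ℕ) : (S k, R k) ≤ C • 1 :=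
    ⟨(le_iff.2 (hSbound k)).trans (hSstarSymm.le_sum_abs_smul_one.trans
        (smul_le_smul_of_nonneg_right (le_max_left _ _) zero_le_one)),
      (le_iff.2 (hRbound k)).trans (hRstarSymm.le_sum_abs_smul_one.trans
        (smul_le_smul_of_nonneg_right (le_max_right _ _) zero_le_one))⟩
  obtain ⟨q, ρ, hq, hρ₀, hρ₁, hTq⟩ := exists_contraction_of_bounded (lyapunovMapDual A F α β)
    (fun _ => lyapunovMapDual_nonneg A F ⟨hα0.le, hα1⟩ ⟨hβ0.le, hβ1⟩) zero_le_one hε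
    (s := fun k => (S k, R k)) (Prod.ext hS0 hR0)
    (fun k => Prod.ext ((hSrec k).trans (add_assoc _ _ _)) ((hRrec k).trans (add_assoc _ _ _))) hC
  exact tendsto_iterate_lyapunovMap ⟨hα0, hα1⟩ ⟨hβ0, hβ1⟩ hε hq hρ₀ hρ₁ hTq (M, N)
end

section
/- Let A ∈ ℝ^{n×n}, B ∈ ℝ^{n×p}, L ∈ ℝ^{p×n}, set F = A + BL, let 0 < α ≤ 1 and 0 < β ≤ 1 with ᾱ = 1−α and β̄ = 1−β, let ε > 0, let W be a real symmetric n×n matrix with εI ⪯ W, and let U be a real positive semidefinite p×p matrix. Define 𝒮̄₀ = ℛ̄₀ = εI and 𝒮̄_{k+1} = W + αLᵀUL + ᾱAᵀ𝒮̄ₖA + αFᵀℛ̄ₖF, ℛ̄_{k+1} = W + β̄LᵀUL + βAᵀ𝒮̄ₖA + β̄Fᵀℛ̄ₖF. Then both sequences are monotone nondecreasing in the Loewner order: 𝒮̄ₖ ⪯ 𝒮̄_{k+1} and ℛ̄ₖ ⪯ ℛ̄_{k+1} for every k. (This is the monotonicity step in the proof of Lemma 1 of the paper.) -/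
open Matrix

/-
The increments `ΔSₖ = 𝒮̄ₖ₊₁ - 𝒮̄ₖ`, `ΔRₖ = ℛ̄ₖ₊₁ - ℛ̄ₖ` satisfy the homogeneous
recursion `ΔSₖ₊₁ = ᾱ AᵀΔSₖA + α FᵀΔRₖF`, `ΔRₖ₊₁ = β AᵀΔSₖA + β̄ FᵀΔRₖF`, whose
right-hand sides are nonnegative combinations of congruences and hence preserve
positive semidefiniteness.
So it suffices that `ΔS₀, ΔR₀ ⪰ 0`, which holds because `W ⪰ εI = 𝒮̄₀ = ℛ̄₀`.
-/

section Loewner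

variable {m n : Type*} [Fintype m] [Fintype n]

theorem Matrix.PosSemidef.transpose_mul_mul_same {M : Matrix m m ℝ} (hM : M.PosSemidef)
    (C : Matrix m n ℝ) : (Cᵀ * M * C).PosSemidef := by
  simpa only [conjTranspose_eq_transpose_of_trivial] using hM.conjTranspose_mul_mul_same C

theorem Matrix.PosSemidef.smul_congr_add_smul_congr {a b : ℝ} (ha : 0 ≤ a) (hb : 0 ≤ b)
    (A F : Matrix n n ℝ) {X Y : Matrix n n ℝ} (hX : X.PosSemidef) (hY : Y.PosSemidef) :
    (a • (Aᵀ * X * A) + b • (Fᵀ * Y * F)).PosSemidef :=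
  ((hX.transpose_mul_mul_same A).smul ha).add ((hY.transpose_mul_mul_same F).smul hb)

theorem Matrix.posSemidef_add_smul_congr_add_smul_congr_sub {a b : ℝ}
    (ha : 0 ≤ a) (hb : 0 ≤ b) (C A F : Matrix n n ℝ) {X X' Y Y' : Matrix n n ℝ}
    (hX : (X - X').PosSemidef) (hY : (Y - Y').PosSemidef) :
    (C + a • (Aᵀ * X * A) + b • (Fᵀ * Y * F)
      - (C + a • (Aᵀ * X' * A) + b • (Fᵀ * Y' * F))).PosSemidef := by
  convert hX.smul_congr_add_smul_congr ha hb A F hY using 1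
  simp only [Matrix.mul_sub, Matrix.sub_mul, smul_sub]
  abel

end Loewner

theorem stmt_3_general {n p : ℕ} (A : Matrix (Fin n) (Fin n) ℝ)
    (L : Matrix (Fin p) (Fin n) ℝ)
    (F : Matrix (Fin n) (Fin n) ℝ)
    (α β : ℝ) (hα0 : 0 < α) (hα1 : α ≤ 1) (hβ0 : 0 < β) (hβ1 : β ≤ 1)
    (ε : ℝ) (hε : 0 < ε)
    (W : Matrix (Fin n) (Fin n) ℝ)
    (hWge : (W - ε • (1 : Matrix (Fin n) (Fin n) ℝ)).PosSemidef)
    (U : Matrix (Fin p) (Fin p) ℝ) (hU : U.PosSemidef)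
    (Sbar Rbar : ℕ → Matrix (Fin n) (Fin n) ℝ)
    (hSbar0 : Sbar 0 = ε • (1 : Matrix (Fin n) (Fin n) ℝ))
    (hRbar0 : Rbar 0 = ε • (1 : Matrix (Fin n) (Fin n) ℝ))
    (hSbarrec : ∀ k, Sbar (k + 1) =
      W + α • (Lᵀ * U * L) + (1 - α) • (Aᵀ * Sbar k * A) + α • (Fᵀ * Rbar k * F))
    (hRbarrec : ∀ k, Rbar (k + 1) =
      W + (1 - β) • (Lᵀ * U * L) + β • (Aᵀ * Sbar k * A) + (1 - β) • (Fᵀ * Rbar k * F)) :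
    ∀ k, (Sbar (k + 1) - Sbar k).PosSemidef ∧ (Rbar (k + 1) - Rbar k).PosSemidef := by
  have hα : 0 ≤ 1 - α := sub_nonneg.2 hα1
  have hβ : 0 ≤ 1 - β := sub_nonneg.2 hβ1
  have hεI : (ε • (1 : Matrix (Fin n) (Fin n) ℝ)).PosSemidef := PosSemidef.one.smul hε.le
  have first_step {Z : Matrix (Fin n) (Fin n) ℝ} (hZ : Z = ε • 1) {a b c : ℝ}
      (hc : 0 ≤ c) (ha : 0 ≤ a) (hb : 0 ≤ b) :
      (W + c • (Lᵀ * U * L) + a • (Aᵀ * Sbar 0 * A) + b • (Fᵀ * Rbar 0 * F)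
        - Z).PosSemidef := by
    rw [hZ, hSbar0, hRbar0]
    convert (hWge.add ((hU.transpose_mul_mul_same L).smul hc)).add
      (hεI.smul_congr_add_smul_congr ha hb A F hεI) using 1
    abel
  intro k
  induction k with
  | zero =>
    rw [hSbarrec, hRbarrec]
    exact ⟨first_step hSbar0 hα0.le hα hα0.le, first_step hRbar0 hβ hβ0.le hβ⟩
  | succ k ih =>
    constructor
    · simpa only [← hSbarrec] using
        posSemidef_add_smul_congr_add_smul_congr_sub hα hα0.le
          (W + α • (Lᵀ * U * L)) A F ih.1 ih.2
    · simpa only [← hRbarrec] using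
        posSemidef_add_smul_congr_add_smul_congr_sub hβ0.le hβ
          (W + (1 - β) • (Lᵀ * U * L)) A F ih.1 ih.2

/-- The monotonicity step in the proof of Lemma 1 of the paper: the
cost-driven Riccati-type sequences `𝒮̄ₖ, ℛ̄ₖ` are monotone nondecreasing in
the Loewner order. -/
theorem stmt_3 {n p : ℕ} (A : Matrix (Fin n) (Fin n) ℝ)
    (B : Matrix (Fin n) (Fin p) ℝ) (L : Matrix (Fin p) (Fin n) ℝ)
    (F : Matrix (Fin n) (Fin n) ℝ) (hF : F = A + B * L)
    (α β : ℝ) (hα0 : 0 < α) (hα1 : α ≤ 1) (hβ0 : 0 < β) (hβ1 : β ≤ 1)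
    (ε : ℝ) (hε : 0 < ε)
    (W : Matrix (Fin n) (Fin n) ℝ) (hWsymm : W.IsSymm)
    (hWge : (W - ε • (1 : Matrix (Fin n) (Fin n) ℝ)).PosSemidef)
    (U : Matrix (Fin p) (Fin p) ℝ) (hU : U.PosSemidef)
    (Sbar Rbar : ℕ → Matrix (Fin n) (Fin n) ℝ)
    (hSbar0 : Sbar 0 = ε • (1 : Matrix (Fin n) (Fin n) ℝ))
    (hRbar0 : Rbar 0 = ε • (1 : Matrix (Fin n) (Fin n) ℝ))
    (hSbarrec : ∀ k, Sbar (k + 1) =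
      W + α • (Lᵀ * U * L) + (1 - α) • (Aᵀ * Sbar k * A) + α • (Fᵀ * Rbar k * F))
    (hRbarrec : ∀ k, Rbar (k + 1) =
      W + (1 - β) • (Lᵀ * U * L) + β • (Aᵀ * Sbar k * A) + (1 - β) • (Fᵀ * Rbar k * F)) :
    ∀ k, (Sbar (k + 1) - Sbar k).PosSemidef ∧ (Rbar (k + 1) - Rbar k).PosSemidef :=
  stmt_3_general A L F α β hα0 hα1 hβ0 hβ1 ε hε W hWge U hU Sbar Rbar hSbar0 hRbar0 hSbarrec
    hRbarrec
end

section
/- Let A ∈ ℝ^{n×n}, B ∈ ℝ^{n×p}, L ∈ ℝ^{p×n}, and 0 ≤ p_d ≤ 1 with p̄_d = 1 − p_d. Define the linear operator 𝓛₁ on n×n real matrices by 𝓛₁(X) = p̄_d (A+BL) X (A+BL)ᵀ + p_d A X Aᵀ. If 𝓛₁ is stable in the sense that 𝓛₁^k(M) → 0 as k → ∞ for every M ∈ ℝ^{n×n}, then the matrix A + p̄_d BL is Schur stable: every eigenvalue of A + p̄_d BL (viewed as a complex matrix) has modulus strictly less than 1. (This is the content of the lemma in the appendix used in the proof of Theorem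 4 of the paper.) -/
/-!
If `A + p̄ BL` has an eigenpair `(λ, v)`, the real matrix `M = Re (v vᴴ)` is positive
semidefinite, nonzero, and satisfies `(A + p̄ BL) M (A + p̄ BL)ᵀ = |λ|² M`. The operator `𝓛₁`
is this congruence plus the positive map `X ↦ p̄ p (BL) X (BL)ᵀ`, so in the Loewner order
`𝓛₁ᵏ(M) ≥ |λ|^(2k) M`. Reading off a positive diagonal entry of `M`, stability of `𝓛₁`
forces `|λ|^(2k) → 0`, i.e. `|λ| < 1`.
-/

open Matrix Filter
open scoped Topology ComplexOrder

variable {ι : Type*}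

namespace Matrix

lemma PosSemidef.map_re [Fintype ι] {W : Matrix ι ι ℂ} (hW : W.PosSemidef) :
    (W.map Complex.re).PosSemidef := by
  refine .of_dotProduct_mulVec_nonneg ?_ fun x => ?_
  · ext i j
    simp [← hW.isHermitian.apply i j]
  · have hre : star x ⬝ᵥ (W.map Complex.re *ᵥ x)
        = (star (fun i => (x i : ℂ)) ⬝ᵥ (W *ᵥ fun i => (x i : ℂ))).re := by
      simp [dotProduct, mulVec, Complex.re_sum, Finset.mul_sum]
    rw [hre]
    exact (Complex.nonneg_iff.mp (hW.dotProduct_mulVec_nonneg _)).1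

lemma PosSemidef.mul_mul_transpose_same {m : Type*} [Fintype ι] [Finite m]
    {X : Matrix ι ι ℝ} (hX : X.PosSemidef) (P : Matrix m ι ℝ) : (P * X * Pᵀ).PosSemidef := by
  simpa using hX.mul_mul_conjTranspose_same P

lemma map_re_ofReal_mul_mul_ofReal {m n : Type*} [Fintype ι] (P : Matrix m ι ℝ)
    (W : Matrix ι ι ℂ) (Q : Matrix ι n ℝ) :
    (P.map Complex.ofReal * W * Q.map Complex.ofReal).map Complex.re
      = P * W.map Complex.re * Q := by
  ext i j
  simp [mul_apply, Complex.re_sum, Finset.sum_mul]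

lemma mul_vecMulVec_star_mul_conjTranspose [Fintype ι] {R : Type*} [CommSemiring R]
    [StarRing R] {C : Matrix ι ι R} {v : ι → R} {μ : R} (hv : C *ᵥ v = μ • v) :
    C * vecMulVec v (star v) * Cᴴ = (μ * star μ) • vecMulVec v (star v) := by
  rw [mul_vecMulVec, vecMulVec_mul, ← star_mulVec, hv, star_smul, smul_vecMulVec,
    vecMulVec_smul, smul_smul]

lemma mul_map_re_vecMulVec_mul_transpose [Fintype ι] {C : Matrix ι ι ℝ} {v : ι → ℂ}
    {μ : ℂ} (hv : C.map Complex.ofReal *ᵥ v = μ • v) :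
    C * (vecMulVec v (star v)).map Complex.re * Cᵀ
      = Complex.normSq μ • (vecMulVec v (star v)).map Complex.re := by
  have hCH : (C.map Complex.ofReal)ᴴ = Cᵀ.map Complex.ofReal := by
    ext i j
    simp
  rw [← map_re_ofReal_mul_mul_ofReal, ← hCH, mul_vecMulVec_star_mul_conjTranspose hv]
  ext i j
  simp [Complex.mul_conj]

lemma posSemidef_iterate_sub_pow_smul {T : Matrix ι ι ℝ →ₗ[ℝ] Matrix ι ι ℝ}
    (hT : ∀ X, X.PosSemidef → (T X).PosSemidef) {r : ℝ} (hr : 0 ≤ r) {M : Matrix ι ι ℝ}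
    (hM : (T M - r • M).PosSemidef) (k : ℕ) : (T^[k] M - r ^ k • M).PosSemidef := by
  induction k with
  | zero => simpa using PosSemidef.zero
  | succ k ih =>
    have h : T^[k + 1] M - r ^ (k + 1) • M
        = T (T^[k] M - r ^ k • M) + r ^ k • (T M - r • M) := by
      rw [Function.iterate_succ_apply', map_sub, map_smul, pow_succ]
      module
    rw [h]
    exact (hT _ ih).add (hM.smul (pow_nonneg hr k))

end Matrix

lemma lt_one_of_pow_mul_le_of_tendsto_zero {r c : ℝ} {f : ℕ → ℝ} (hc : 0 < c)
    (hf : Tendsto f atTop (𝓝 0)) (hle : ∀ k, r ^ k * c ≤ f k) : r < 1 := by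
  by_contra! hr
  have hcf : ∀ k, c ≤ f k := fun k =>
    (le_mul_of_one_le_left hc.le (one_le_pow₀ hr)).trans (hle k)
  exact hc.not_ge (ge_of_tendsto' hf hcf)

theorem Matrix.normSq_lt_one_of_tendsto_iterate [Fintype ι] {C : Matrix ι ι ℝ}
    {T : Matrix ι ι ℝ →ₗ[ℝ] Matrix ι ι ℝ}
    (hT : ∀ X, X.PosSemidef → (T X - C * X * Cᵀ).PosSemidef)
    (hstable : ∀ M, Tendsto (fun k => T^[k] M) atTop (𝓝 0))
    {μ : ℂ} {v : ι → ℂ} (hv : v ≠ 0) (hev : C.map Complex.ofReal *ᵥ v = μ • v) :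
    Complex.normSq μ < 1 := by
  set M := (vecMulVec v (star v)).map Complex.re
  have hMpsd : M.PosSemidef := (posSemidef_vecMulVec_self_star v).map_re
  have hCM : C * M * Cᵀ = Complex.normSq μ • M := mul_map_re_vecMulVec_mul_transpose hev
  have hTpos : ∀ X, X.PosSemidef → (T X).PosSemidef := fun X hX => by
    simpa using (hT X hX).add (hX.mul_mul_transpose_same C)
  obtain ⟨i, hi⟩ := Function.ne_iff.mp hv
  have hMi : 0 < M i i := by
    change 0 < (v i * star (v i)).re
    rw [Complex.star_def, Complex.mul_conj, Complex.ofReal_re]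
    exact Complex.normSq_pos.mpr hi
  have hbound : ∀ k, Complex.normSq μ ^ k * M i i ≤ (T^[k] M) i i := fun k => by
    simpa [sub_nonneg] using (posSemidef_iterate_sub_pow_smul hTpos (Complex.normSq_nonneg μ)
      (hCM ▸ hT M hMpsd) k).diag_nonneg (i := i)
  exact lt_one_of_pow_mul_le_of_tendsto_zero hMi
    (((continuous_apply_apply i i).tendsto 0).comp (hstable M)) hbound

-- `A + δ P` with `δ ~ Bernoulli(1 - pd)`: second moment minus squared mean is the variance term.
lemma Matrix.bernoulli_second_moment_sub_mean_sq [Fintype ι] (A P X : Matrix ι ι ℝ) (pd : ℝ) :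
    (1 - pd) • ((A + P) * X * (A + P)ᵀ) + pd • (A * X * Aᵀ)
      - (A + (1 - pd) • P) * X * (A + (1 - pd) • P)ᵀ = ((1 - pd) * pd) • (P * X * Pᵀ) := by
  simp only [transpose_add, transpose_smul, add_mul, mul_add, Matrix.smul_mul, Matrix.mul_smul,
    smul_add, smul_smul]
  module

/-- Appendix lemma of the paper: if the second-moment operator
`𝓛₁(X) = p̄_d (A+BL) X (A+BL)ᵀ + p_d A X Aᵀ` is stable, then the mean
dynamics matrix `A + p̄_d BL` is Schur stable. -/
theorem stmt_5 {n p : ℕ} (A : Matrix (Fin n) (Fin n) ℝ)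
    (B : Matrix (Fin n) (Fin p) ℝ) (L : Matrix (Fin p) (Fin n) ℝ)
    (pd : ℝ) (hpd0 : 0 ≤ pd) (hpd1 : pd ≤ 1)
    (L1 : Matrix (Fin n) (Fin n) ℝ → Matrix (Fin n) (Fin n) ℝ)
    (hL1 : ∀ X, L1 X =
      (1 - pd) • ((A + B * L) * X * (A + B * L)ᵀ) + pd • (A * X * Aᵀ))
    (hstable : ∀ M : Matrix (Fin n) (Fin n) ℝ,
      Tendsto (fun k => L1^[k] M) atTop (𝓝 0)) :
    ∀ (lam : ℂ) (v : Fin n → ℂ), v ≠ 0 →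
      ((A + (1 - pd) • (B * L)).map (Complex.ofReal)).mulVec v = lam • v →
      ‖lam‖ < 1 := by
  intro lam v hv hev
  let T := (1 - pd) • LinearMap.mulLeftRight ℝ (A + B * L, (A + B * L)ᵀ)
    + pd • LinearMap.mulLeftRight ℝ (A, Aᵀ)
  have hT : ⇑T = L1 := funext fun X => by simp [T, hL1]
  have hdom : ∀ X, X.PosSemidef →
      (T X - (A + (1 - pd) • (B * L)) * X * (A + (1 - pd) • (B * L))ᵀ).PosSemidef :=
    fun X hX => by
      rw [congrFun hT X, hL1, bernoulli_second_moment_sub_mean_sq]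
      exact (hX.mul_mul_transpose_same _).smul (mul_nonneg (by linarith) hpd0)
  have hlam := normSq_lt_one_of_tendsto_iterate hdom (hT ▸ hstable) hv hev
  rwa [Complex.normSq_eq_norm_sq, sq_lt_one_iff₀ (norm_nonneg lam)] at hlam
end

section
/- Let 0 < α ≤ 1 and 0 < β ≤ 1, and let A ∈ ℝ^{n×n}, B ∈ ℝ^{n×p}, L ∈ ℝ^{p×n}, and 𝒬 a real positive semidefinite p×p matrix. On a probability space let X′ : Ω → ℝⁿ be square-integrable, let Δu : Ω → ℝ^p be square-integrable with E[Δu] = 0 and E[Δu Δuᵀ] = 𝒬, and let η, η₋ : Ω → {0,1} be random variables. Assume: (i) Δu is independent of the triple (X′, η, η₋); (ii) P(η₋ = 1) = α/(α+β); (iii) P(η = 1 | η₋ = 1) = 1−β and P(η = 1 | η₋ = 0) = α; (iv) X′X′ᵀ and the event {η = 1} are conditionally independent given η₋, i.e., E[X′X′ᵀ·1_{η=1}·1_{η₋=j}] = P(η=1 | η₋=j)·E[X′X′ᵀ·1_{η₋=j}] for j ∈ {0,1}. Define X″ = (A + η·BL)X′ + η·B·Δu. Then E[X″X″ᵀ |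 η = 1] = (A+BL)·[ (1−β)·E[X′X′ᵀ | η₋ = 1] + β·E[X′X′ᵀ | η₋ = 0] ]·(A+BL)ᵀ + B𝒬Bᵀ, and E[X″X″ᵀ | η = 0] = A·[ α·E[X′X′ᵀ | η₋ = 1] + (1−α)·E[X′X′ᵀ | η₋ = 0] ]·Aᵀ. (This is the single-step conditional second-moment recursion, equations (eq:notfixedx1)–(eq:split0), established in the proof of Theorem 3 of the paper for the virtual watermark-driven state under stationary Markovian drops.) -/
/-!
On `{η = 1}` the new state is `(A + BL)X′ + BΔu`: independence of `Δu` from `(X′, η, η₋)` and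
`E[Δu] = 0` kill the cross terms, and the noise contributes `P(η = 1)·BQBᵀ`. On `{η = 0}` it is
`AX′`. Conditional independence splits `E[X′X′ᵀ; η = i]` over the two values of `η₋`, weighted by
the transition probabilities. Stationarity gives `P(η = 1) = P(η₋ = 1)` together with the balance
`α·P(η₋ = 0) = β·P(η₋ = 1)`, which turns these weights into the ones of the conditional moments.
-/

open Matrix MeasureTheory ProbabilityTheory

/-- The conditional second moment `E[X Xᵀ | S]` (entrywise), where
`E[Z | S] = E[Z·1_S]/P(S)`. -/
noncomputable def condSecondMoment {Ω : Type*} [MeasurableSpace Ω] (μ : Measure Ω)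
    {n : ℕ} (X : Ω → Fin n → ℝ) (S : Set Ω) : Matrix (Fin n) (Fin n) ℝ :=
  Matrix.of fun i j => (∫ ω in S, X ω i * X ω j ∂μ) / (μ S).toReal

noncomputable def crossMomentOn {Ω ι κ : Type*} [MeasurableSpace Ω] (μ : Measure Ω)
    (X : Ω → ι → ℝ) (Y : Ω → κ → ℝ) (S : Set Ω) : Matrix ι κ ℝ :=
  Matrix.of fun i j => ∫ ω in S, X ω i * Y ω j ∂μ

section CrossMoment

variable {Ω ι κ ι' κ' : Type*} [MeasurableSpace Ω] {μ : Measure Ω}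
  {X X₁ X₂ : Ω → ι → ℝ} {Y Y₁ Y₂ : Ω → κ → ℝ} {S : Set Ω}

lemma condSecondMoment_eq_inv_smul {n : ℕ} (X : Ω → Fin n → ℝ) (S : Set Ω) :
    condSecondMoment μ X S = (μ.real S)⁻¹ • crossMomentOn μ X X S := by
  ext i j
  simp [condSecondMoment, crossMomentOn, measureReal_def, div_eq_inv_mul]

lemma crossMomentOn_transpose : (crossMomentOn μ X Y S)ᵀ = crossMomentOn μ Y X S := by
  ext i j
  simp only [crossMomentOn, transpose_apply, of_apply, mul_comm]

lemma crossMomentOn_congr (hS : NullMeasurableSet S μ) (hX : Set.EqOn X₁ X₂ S)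
    (hY : Set.EqOn Y₁ Y₂ S) : crossMomentOn μ X₁ Y₁ S = crossMomentOn μ X₂ Y₂ S := by
  ext i j
  exact setIntegral_congr_fun₀ hS fun ω hω => by simp only [hX hω, hY hω]

lemma crossMomentOn_inter_eq_smul {E F : Set Ω} {r : ℝ} (hr : 0 ≤ r)
    (hEF : μ (E ∩ F) = ENNReal.ofReal r * μ F) (hF : μ.real F ≠ 0)
    (h : ∀ i j, ∫ ω in E ∩ F, X ω i * Y ω j ∂μ =
      (μ (E ∩ F) / μ F).toReal * ∫ ω in F, X ω i * Y ω j ∂μ) :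
    crossMomentOn μ X Y (E ∩ F) = r • crossMomentOn μ X Y F := by
  obtain ⟨hF0, hFtop⟩ := ENNReal.toReal_ne_zero.1 hF
  have hratio : (μ (E ∩ F) / μ F).toReal = r := by
    rw [hEF, ENNReal.mul_div_cancel_right hF0 hFtop, ENNReal.toReal_ofReal hr]
  ext i j
  simp only [crossMomentOn, of_apply, Matrix.smul_apply, smul_eq_mul, h i j, hratio]

variable [Fintype ι] [Fintype κ]

lemma MeasureTheory.MemLp.integrable_apply_mul_apply (hX : MemLp X 2 μ) (hY : MemLp Y 2 μ)
    (i : ι) (j : κ) : Integrable (fun ω => X ω i * Y ω j) μ :=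
  (hX.eval i).integrable_mul (hY.eval j)

lemma MeasureTheory.MemLp.matrix_mulVec [Fintype ι'] (M : Matrix ι' ι ℝ) (hX : MemLp X 2 μ) :
    MemLp (fun ω => M *ᵥ X ω) 2 μ :=
  memLp_pi_iff.2 fun i => by
    simpa only [mulVec, dotProduct, Finset.sum_fn] using
      memLp_finsetSum' (p := 2) Finset.univ fun k _ => (hX.eval k).const_mul (M i k)

lemma crossMomentOn_add_left (hX₁ : MemLp X₁ 2 μ) (hX₂ : MemLp X₂ 2 μ) (hY : MemLp Y 2 μ) :
    crossMomentOn μ (X₁ + X₂) Y S = crossMomentOn μ X₁ Y S + crossMomentOn μ X₂ Y S := by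
  ext i j
  simp only [crossMomentOn, of_apply, Matrix.add_apply, Pi.add_apply, add_mul]
  exact integral_add (hX₁.integrable_apply_mul_apply hY i j).integrableOn
    (hX₂.integrable_apply_mul_apply hY i j).integrableOn

lemma crossMomentOn_add_right (hX : MemLp X 2 μ) (hY₁ : MemLp Y₁ 2 μ) (hY₂ : MemLp Y₂ 2 μ) :
    crossMomentOn μ X (Y₁ + Y₂) S = crossMomentOn μ X Y₁ S + crossMomentOn μ X Y₂ S := by
  ext i j
  simp only [crossMomentOn, of_apply, Matrix.add_apply, Pi.add_apply, mul_add]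
  exact integral_add (hX.integrable_apply_mul_apply hY₁ i j).integrableOn
    (hX.integrable_apply_mul_apply hY₂ i j).integrableOn

lemma crossMomentOn_mulVec_mulVec [Fintype ι'] [Fintype κ'] (M : Matrix ι' ι ℝ)
    (N : Matrix κ' κ ℝ) (hX : MemLp X 2 μ) (hY : MemLp Y 2 μ) :
    crossMomentOn μ (fun ω => M *ᵥ X ω) (fun ω => N *ᵥ Y ω) S
      = M * crossMomentOn μ X Y S * Nᵀ := by
  ext i j
  have hint (k : ι) (l : κ) : IntegrableOn (fun ω => M i k * N j l * (X ω k * Y ω l)) S μ :=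
    ((hX.integrable_apply_mul_apply hY k l).const_mul _).integrableOn
  have hexpand ω : (M *ᵥ X ω) i * (N *ᵥ Y ω) j = ∑ k, ∑ l, M i k * N j l * (X ω k * Y ω l) := by
    simp only [mulVec, dotProduct, Finset.sum_mul_sum]
    exact Finset.sum_congr rfl fun k _ => Finset.sum_congr rfl fun l _ => by ring
  simp only [crossMomentOn, of_apply, hexpand, mul_apply, transpose_apply, Finset.sum_mul]
  rw [integral_finsetSum _ fun k _ => integrable_finsetSum _ fun l _ => hint k l,
    Finset.sum_comm (γ := κ)]
  refine Finset.sum_congr rfl fun k _ => ?_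
  rw [integral_finsetSum _ fun l _ => hint k l]
  refine Finset.sum_congr rfl fun l _ => ?_
  rw [integral_const_mul]
  ring

lemma crossMomentOn_inter_add_inter_compl (E : Set Ω) {F : Set Ω} (hF : MeasurableSet F)
    (hX : MemLp X 2 μ) (hY : MemLp Y 2 μ) :
    crossMomentOn μ X Y (E ∩ F) + crossMomentOn μ X Y (E ∩ Fᶜ) = crossMomentOn μ X Y E := by
  ext i j
  exact integral_inter_add_sdiff hF (hX.integrable_apply_mul_apply hY i j).integrableOn

lemma crossMomentOn_eq_add_of_inter_eq_smul {E F : Set Ω} (hE : MeasurableSet E)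
    (hF : MeasurableSet F) (hX : MemLp X 2 μ) (hY : MemLp Y 2 μ) {p q : ℝ}
    (hp : crossMomentOn μ X Y (E ∩ F) = p • crossMomentOn μ X Y F)
    (hq : crossMomentOn μ X Y (E ∩ Fᶜ) = q • crossMomentOn μ X Y Fᶜ) :
    crossMomentOn μ X Y E = p • crossMomentOn μ X Y F + q • crossMomentOn μ X Y Fᶜ ∧
      crossMomentOn μ X Y Eᶜ
        = (1 - p) • crossMomentOn μ X Y F + (1 - q) • crossMomentOn μ X Y Fᶜ := by
  have hEcF : crossMomentOn μ X Y (Eᶜ ∩ F) = (1 - p) • crossMomentOn μ X Y F := by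
    have := crossMomentOn_inter_add_inter_compl F hE hX hY
    rw [Set.inter_comm F E, hp, Set.inter_comm] at this
    rw [sub_smul, one_smul, eq_sub_iff_add_eq']
    exact this
  have hEcFc : crossMomentOn μ X Y (Eᶜ ∩ Fᶜ) = (1 - q) • crossMomentOn μ X Y Fᶜ := by
    have := crossMomentOn_inter_add_inter_compl Fᶜ hE hX hY
    rw [Set.inter_comm Fᶜ E, hq, Set.inter_comm] at this
    rw [sub_smul, one_smul, eq_sub_iff_add_eq']
    exact this
  refine ⟨by rw [← crossMomentOn_inter_add_inter_compl E hF hX hY, hp, hq], ?_⟩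
  rw [← crossMomentOn_inter_add_inter_compl Eᶜ hF hX hY, hEcF, hEcFc]

end CrossMoment

section Independence

variable {Ω β γ κ : Type*} [MeasurableSpace Ω] [MeasurableSpace β] [MeasurableSpace γ]
  {μ : Measure Ω} {V : Ω → β} {s : Set β}

lemma setIntegral_preimage_comp_mul_comp {U : Ω → γ} (h : V ⟂ᵢ[μ] U) (hV : AEMeasurable V μ)
    (hU : AEMeasurable U μ) (hs : MeasurableSet s) {F : β → ℝ} {G : γ → ℝ} (hF : Measurable F)
    (hG : Measurable G) :
    ∫ ω in V ⁻¹' s, F (V ω) * G (U ω) ∂μ = (∫ ω in V ⁻¹' s, F (V ω) ∂μ) * ∫ ω, G (U ω) ∂μ := by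
  have hS : NullMeasurableSet (V ⁻¹' s) μ := hV.nullMeasurableSet_preimage hs
  simp only [← integral_indicator₀ hS, Set.indicator_mul_left]
  exact h.integral_fun_comp_mul_comp (f := s.indicator F) hV hU
    (hF.indicator hs).aestronglyMeasurable hG.aestronglyMeasurable

variable {U : Ω → κ → ℝ}

lemma crossMomentOn_preimage_eq_zero_of_indepFun {ι : Type*} (h : V ⟂ᵢ[μ] U) (hV : AEMeasurable V μ)
    (hU : AEMeasurable U μ) (hs : MeasurableSet s) {f : β → ι → ℝ} (hf : Measurable f)
    (hmean : ∀ l, ∫ ω, U ω l ∂μ = 0) :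
    crossMomentOn μ (fun ω => f (V ω)) U (V ⁻¹' s) = 0 := by
  ext k l
  rw [crossMomentOn, of_apply, setIntegral_preimage_comp_mul_comp h hV hU hs
    (F := fun b => f b k) (G := fun u => u l) ((measurable_pi_apply k).comp hf)
    (measurable_pi_apply l), hmean, mul_zero]
  rfl

lemma crossMomentOn_preimage_self_of_indepFun (h : V ⟂ᵢ[μ] U) (hV : AEMeasurable V μ)
    (hU : AEMeasurable U μ) (hs : MeasurableSet s) :
    crossMomentOn μ U U (V ⁻¹' s) = μ.real (V ⁻¹' s) • crossMomentOn μ U U Set.univ := by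
  ext k l
  have := setIntegral_preimage_comp_mul_comp h hV hU hs (F := fun _ => (1 : ℝ))
    (G := fun u => u k * u l) measurable_const
    ((measurable_pi_apply k).mul (measurable_pi_apply l))
  simp only [one_mul, setIntegral_const, smul_eq_mul, mul_one] at this
  simp [crossMomentOn, this]

lemma crossMomentOn_preimage_mulVec_add_mulVec {ι ι' : Type*} [Fintype ι] [Fintype ι']
    [Fintype κ] (M : Matrix ι' ι ℝ) (N : Matrix ι' κ ℝ) {f : β → ι → ℝ} (h : V ⟂ᵢ[μ] U)
    (hV : AEMeasurable V μ) (hs : MeasurableSet s) (hf : Measurable f)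
    (hX : MemLp (fun ω => f (V ω)) 2 μ) (hU : MemLp U 2 μ) (hmean : ∀ l, ∫ ω, U ω l ∂μ = 0)
    {Q : Matrix κ κ ℝ} (hcov : ∀ k l, ∫ ω, U ω k * U ω l ∂μ = Q k l) :
    crossMomentOn μ (fun ω => M *ᵥ f (V ω) + N *ᵥ U ω) (fun ω => M *ᵥ f (V ω) + N *ᵥ U ω)
        (V ⁻¹' s)
      = M * crossMomentOn μ (fun ω => f (V ω)) (fun ω => f (V ω)) (V ⁻¹' s) * Mᵀ
        + μ.real (V ⁻¹' s) • (N * Q * Nᵀ) := by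
  have hMX := hX.matrix_mulVec M
  have hNU := hU.matrix_mulVec N
  have hcross := crossMomentOn_preimage_eq_zero_of_indepFun h hV hU.aemeasurable hs hf hmean
  have hQ : crossMomentOn μ U U Set.univ = Q := by
    ext k l
    simp [crossMomentOn, hcov]
  have hcross' : crossMomentOn μ U (fun ω => f (V ω)) (V ⁻¹' s) = 0 := by
    rw [← crossMomentOn_transpose, hcross, transpose_zero]
  change crossMomentOn μ ((fun ω => M *ᵥ f (V ω)) + fun ω => N *ᵥ U ω)
    ((fun ω => M *ᵥ f (V ω)) + fun ω => N *ᵥ U ω) (V ⁻¹' s) = _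
  rw [crossMomentOn_add_left hMX hNU (hMX.add hNU), crossMomentOn_add_right hMX hMX hNU,
    crossMomentOn_add_right hNU hMX hNU, crossMomentOn_mulVec_mulVec M M hX hX,
    crossMomentOn_mulVec_mulVec M N hX hU, crossMomentOn_mulVec_mulVec N M hU hX,
    crossMomentOn_mulVec_mulVec N N hU hU, hcross, hcross',
    crossMomentOn_preimage_self_of_indepFun h hV hU.aemeasurable hs, hQ]
  simp only [Matrix.mul_zero, Matrix.zero_mul, add_zero, zero_add, Matrix.mul_smul,
    Matrix.smul_mul]

end Independence

lemma measureReal_eq_of_stationary {Ω : Type*} [MeasurableSpace Ω] {μ : Measure Ω}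
    [IsProbabilityMeasure μ] {E F : Set Ω} (hE : MeasurableSet E) (hF : MeasurableSet F)
    {α β : ℝ} (hα : 0 < α) (hβ : 0 < β) (hβ1 : β ≤ 1)
    (hFα : μ F = ENNReal.ofReal (α / (α + β)))
    (hEF : μ (E ∩ F) = ENNReal.ofReal (1 - β) * μ F)
    (hEFc : μ (E ∩ Fᶜ) = ENNReal.ofReal α * μ Fᶜ) :
    μ.real F = α / (α + β) ∧ μ.real Fᶜ = β / (α + β) ∧
      μ.real E = α / (α + β) ∧ μ.real Eᶜ = β / (α + β) := by
  have hF' : μ.real F = α / (α + β) := by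
    rw [measureReal_def, hFα, ENNReal.toReal_ofReal (by positivity)]
  have hFc : μ.real Fᶜ = β / (α + β) := by
    rw [probReal_compl_eq_one_sub hF, hF']
    field_simp
    ring
  have hE' : μ.real E = α / (α + β) := by
    rw [← measureReal_inter_add_sdiff (s := E) hF, Set.sdiff_eq, measureReal_def, hEF,
      measureReal_def, hEFc, ENNReal.toReal_mul, ENNReal.toReal_mul,
      ENNReal.toReal_ofReal (by linarith), ENNReal.toReal_ofReal hα.le, ← measureReal_def,
      ← measureReal_def, hF', hFc]
    field_simp
    ring
  refine ⟨hF', hFc, hE', ?_⟩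
  rw [probReal_compl_eq_one_sub hE, hE']
  field_simp
  ring

theorem stmt_13_general {Ω : Type*} [MeasurableSpace Ω] (μ : Measure Ω) [IsProbabilityMeasure μ]
    {n p : ℕ} (α β : ℝ) (hα0 : 0 < α) (hβ0 : 0 < β) (hβ1 : β ≤ 1)
    (A : Matrix (Fin n) (Fin n) ℝ) (B : Matrix (Fin n) (Fin p) ℝ)
    (L : Matrix (Fin p) (Fin n) ℝ)
    (Q : Matrix (Fin p) (Fin p) ℝ)
    (X' : Ω → Fin n → ℝ) (hX'L2 : MemLp X' 2 μ)
    (Δu : Ω → Fin p → ℝ) (hΔuL2 : MemLp Δu 2 μ)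
    (hΔumean : ∀ i, ∫ ω, Δu ω i ∂μ = 0)
    (hΔucov : ∀ i j, ∫ ω, Δu ω i * Δu ω j ∂μ = Q i j)
    (η ηm : Ω → ℝ) (hηmeas : Measurable η) (hηmmeas : Measurable ηm)
    (hη01 : ∀ ω, η ω = 0 ∨ η ω = 1) (hηm01 : ∀ ω, ηm ω = 0 ∨ ηm ω = 1)
    -- (i) Δu is independent of the triple (X′, η, η₋)
    (hindep : IndepFun Δu (fun ω => (X' ω, η ω, ηm ω)) μ)
    -- (ii) stationary distribution of the Markovian drop process
    (hηmlaw : μ {ω | ηm ω = 1} = ENNReal.ofReal (α / (α + β)))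
    -- (iii) Markov transition probabilities
    (htrans1 : μ ({ω | η ω = 1} ∩ {ω | ηm ω = 1}) =
      ENNReal.ofReal (1 - β) * μ {ω | ηm ω = 1})
    (htrans0 : μ ({ω | η ω = 1} ∩ {ω | ηm ω = 0}) =
      ENNReal.ofReal α * μ {ω | ηm ω = 0})
    -- (iv) conditional independence of X′X′ᵀ and {η = 1} given η₋
    (hcondindep : ∀ (j : ℝ), j = 0 ∨ j = 1 → ∀ i i',
      ∫ ω in {ω | η ω = 1} ∩ {ω | ηm ω = j}, X' ω i * X' ω i' ∂μ =
        (μ ({ω | η ω = 1} ∩ {ω | ηm ω = j}) / μ {ω | ηm ω = j}).toReal *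
          ∫ ω in {ω | ηm ω = j}, X' ω i * X' ω i' ∂μ)
    (X'' : Ω → Fin n → ℝ)
    (hX'' : ∀ ω, X'' ω =
      (A + η ω • (B * L)).mulVec (X' ω) + η ω • B.mulVec (Δu ω)) :
    condSecondMoment μ X'' {ω | η ω = 1} =
      (A + B * L) *
        ((1 - β) • condSecondMoment μ X' {ω | ηm ω = 1} +
          β • condSecondMoment μ X' {ω | ηm ω = 0}) * (A + B * L)ᵀ +
        B * Q * Bᵀ ∧
    condSecondMoment μ X'' {ω | η ω = 0} =
      A * (α • condSecondMoment μ X' {ω | ηm ω = 1} +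
          (1 - α) • condSecondMoment μ X' {ω | ηm ω = 0}) * Aᵀ := by
  set S := {ω | η ω = 1}
  set T := {ω | ηm ω = 1}
  have hS : MeasurableSet S := hηmeas (measurableSet_singleton 1)
  have hT : MeasurableSet T := hηmmeas (measurableSet_singleton 1)
  have hSc : {ω | η ω = 0} = Sᶜ := by ext ω; rcases hη01 ω with h | h <;> simp [S, h]
  have hTc : {ω | ηm ω = 0} = Tᶜ := by ext ω; rcases hηm01 ω with h | h <;> simp [T, h]
  rw [hTc] at htrans0
  obtain ⟨hPT, hPTc, hPS, hPSc⟩ :=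
    measureReal_eq_of_stationary hS hT hα0 hβ0 hβ1 hηmlaw htrans1 htrans0
  obtain ⟨hCS, hCSc⟩ := crossMomentOn_eq_add_of_inter_eq_smul hS hT hX'L2 hX'L2
    (crossMomentOn_inter_eq_smul (by linarith) htrans1 (by rw [hPT]; positivity)
      (hcondindep 1 (Or.inr rfl)))
    (crossMomentOn_inter_eq_smul hα0.le htrans0 (by rw [hPTc]; positivity)
      (hTc ▸ hcondindep 0 (Or.inl rfl)))
  have hX''S : crossMomentOn μ X'' X'' S
      = (A + B * L) * crossMomentOn μ X' X' S * (A + B * L)ᵀ + μ.real S • (B * Q * Bᵀ) := by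
    have hon : Set.EqOn X'' (fun ω => (A + B * L) *ᵥ X' ω + B *ᵥ Δu ω) S :=
      fun ω (hω : η ω = 1) => by simp [hX'' ω, hω]
    have hX'ae := hX'L2.aestronglyMeasurable.aemeasurable
    rw [crossMomentOn_congr hS.nullMeasurableSet hon hon]
    -- `S` is the preimage of `{w | w.2.1 = 1}` under `ω ↦ (X' ω, η ω, ηm ω)`.
    exact crossMomentOn_preimage_mulVec_add_mulVec (A + B * L) B (f := Prod.fst)
      (s := {w : (Fin n → ℝ) × ℝ × ℝ | w.2.1 = 1}) hindep.symm (by fun_prop)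
      (measurable_snd.fst (measurableSet_singleton 1)) measurable_fst hX'L2 hΔuL2 hΔumean hΔucov
  have hX''Sc : crossMomentOn μ X'' X'' Sᶜ = A * crossMomentOn μ X' X' Sᶜ * Aᵀ := by
    have hon : Set.EqOn X'' (fun ω => A *ᵥ X' ω) Sᶜ :=
      fun ω hω => by simp [hX'' ω, (hη01 ω).resolve_right hω]
    rw [crossMomentOn_congr hS.compl.nullMeasurableSet hon hon,
      crossMomentOn_mulVec_mulVec A A hX'L2 hX'L2]
  rw [hSc, hTc]
  simp only [condSecondMoment_eq_inv_smul, hX''S, hX''Sc, hCS, hCSc, hPS, hPSc, hPT, hPTc]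
  constructor <;>
  · simp only [Matrix.mul_add, Matrix.add_mul, Matrix.mul_smul, Matrix.smul_mul, smul_add,
      smul_smul]
    match_scalars <;> field_simp <;> ring

/-- The single-step conditional second-moment recursion, equations
(eq:notfixedx1)–(eq:split0) in the proof of Theorem 3 of the paper, for the
virtual watermark-driven state under stationary Markovian drops. -/
theorem stmt_13 {Ω : Type*} [MeasurableSpace Ω] (μ : Measure Ω) [IsProbabilityMeasure μ]
    {n p : ℕ} (α β : ℝ) (hα0 : 0 < α) (hα1 : α ≤ 1) (hβ0 : 0 < β) (hβ1 : β ≤ 1)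
    (A : Matrix (Fin n) (Fin n) ℝ) (B : Matrix (Fin n) (Fin p) ℝ)
    (L : Matrix (Fin p) (Fin n) ℝ)
    (Q : Matrix (Fin p) (Fin p) ℝ) (hQ : Q.PosSemidef)
    (X' : Ω → Fin n → ℝ) (hX'meas : Measurable X') (hX'L2 : MemLp X' 2 μ)
    (Δu : Ω → Fin p → ℝ) (hΔumeas : Measurable Δu) (hΔuL2 : MemLp Δu 2 μ)
    (hΔumean : ∀ i, ∫ ω, Δu ω i ∂μ = 0)
    (hΔucov : ∀ i j, ∫ ω, Δu ω i * Δu ω j ∂μ = Q i j)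
    (η ηm : Ω → ℝ) (hηmeas : Measurable η) (hηmmeas : Measurable ηm)
    (hη01 : ∀ ω, η ω = 0 ∨ η ω = 1) (hηm01 : ∀ ω, ηm ω = 0 ∨ ηm ω = 1)
    -- (i) Δu is independent of the triple (X′, η, η₋)
    (hindep : IndepFun Δu (fun ω => (X' ω, η ω, ηm ω)) μ)
    -- (ii) stationary distribution of the Markovian drop process
    (hηmlaw : μ {ω | ηm ω = 1} = ENNReal.ofReal (α / (α + β)))
    -- (iii) Markov transition probabilities
    (htrans1 : μ ({ω | η ω = 1} ∩ {ω | ηm ω = 1}) =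
      ENNReal.ofReal (1 - β) * μ {ω | ηm ω = 1})
    (htrans0 : μ ({ω | η ω = 1} ∩ {ω | ηm ω = 0}) =
      ENNReal.ofReal α * μ {ω | ηm ω = 0})
    -- (iv) conditional independence of X′X′ᵀ and {η = 1} given η₋
    (hcondindep : ∀ (j : ℝ), j = 0 ∨ j = 1 → ∀ i i',
      ∫ ω in {ω | η ω = 1} ∩ {ω | ηm ω = j}, X' ω i * X' ω i' ∂μ =
        (μ ({ω | η ω = 1} ∩ {ω | ηm ω = j}) / μ {ω | ηm ω = j}).toReal *
          ∫ ω in {ω | ηm ω = j}, X' ω i * X' ω i' ∂μ)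
    (X'' : Ω → Fin n → ℝ)
    (hX'' : ∀ ω, X'' ω =
      (A + η ω • (B * L)).mulVec (X' ω) + η ω • B.mulVec (Δu ω)) :
    condSecondMoment μ X'' {ω | η ω = 1} =
      (A + B * L) *
        ((1 - β) • condSecondMoment μ X' {ω | ηm ω = 1} +
          β • condSecondMoment μ X' {ω | ηm ω = 0}) * (A + B * L)ᵀ +
        B * Q * Bᵀ ∧
    condSecondMoment μ X'' {ω | η ω = 0} =
      A * (α • condSecondMoment μ X' {ω | ηm ω = 1} +
          (1 - α) • condSecondMoment μ X' {ω | ηm ω = 0}) * Aᵀ :=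
  stmt_13_general μ α β hα0 hβ0 hβ1 A B L Q X' hX'L2 Δu hΔuL2 hΔumean hΔucov η ηm hηmeas hηmmeas
    hη01 hηm01 hindep hηmlaw htrans1 htrans0 hcondindep X'' hX''
end
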